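/- arXiv:2305.09973 — 2 statements merged into one kernel-verified Lean document; each statement's English description precedes it below -/
import Mathlib

section
/- Let U be an r×n matrix over F(ε) such that for every size-r subset S ⊆ [n], lim_{ε→0} det(U_S) exists. Then there exists a matrix Û ∈ F^{r×n} such that for every size-r subset S ⊆ [n], lim_{ε→0} det(U_S) = det(Û_S). -/
open Polynomial Matrix
open scoped Classical

/-- The ε-adic valuation on F(ε): `val(g/h) = mindeg g - mindeg h` for nonzero elements
(`mindeg p = rootMultiplicity 0 p`), and `val 0 = +∞`. -/
noncomputable def rfval {F : Type*} [Field F] (f : RatFunc F) : WithTop ℤ :=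
  if f = 0 then ⊤
  else (((f.num.rootMultiplicity 0 : ℤ) - (f.denom.rootMultiplicity 0 : ℤ) : ℤ) : WithTop ℤ)

/-- `lim_{ε→0} f` exists iff `f` has no pole at ε = 0, i.e. val(f) ≥ 0. -/
def rfHasLim {F : Type*} [Field F] (f : RatFunc F) : Prop := 0 ≤ rfval f

/-- The value of `f` at ε = 0 (the limit of `f` at 0, when it exists). -/
noncomputable def rfLim {F : Type*} [Field F] (f : RatFunc F) : F :=
  f.eval (RingHom.id F) 0

/-- The submatrix of `U` consisting of the columns indexed by a size-`r` subset `S` of `[n]`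
(taken in increasing order). -/
def colSub {α : Type*} {r n : ℕ} (U : Matrix (Fin r) (Fin n) α)
    (S : {S : Finset (Fin n) // S.card = r}) : Matrix (Fin r) (Fin r) α :=
  U.submatrix id (fun j : Fin r => (S.1.orderIsoOfFin S.2 j : Fin n))

namespace MinorsAux
variable {F : Type*} [Field F]

lemma rfval_zero : rfval (0 : RatFunc F) = ⊤ := by simp [rfval]

lemma eq_zero_of_rfval_eq_top {f : RatFunc F} (h : rfval f = ⊤) : f = 0 := by
  by_contra hf
  simp [rfval, hf] at h

lemma rfval_mul {f g : RatFunc F} (hf : f ≠ 0) (hg : g ≠ 0) :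
    rfval (f * g) = rfval f + rfval g := by
  have hfg : f * g ≠ 0 := mul_ne_zero hf hg
  have key := RatFunc.num_denom_mul f g
  have h1 : (f * g).num ≠ 0 := RatFunc.num_ne_zero hfg
  have h2 : f.num ≠ 0 := RatFunc.num_ne_zero hf
  have h3 : g.num ≠ 0 := RatFunc.num_ne_zero hg
  have d1 := RatFunc.denom_ne_zero (f * g)
  have d2 := RatFunc.denom_ne_zero f
  have d3 := RatFunc.denom_ne_zero g
  have hL : ((f*g).num * (f.denom * g.denom)).rootMultiplicity 0
      = (f.num * g.num * (f*g).denom).rootMultiplicity 0 := by rw [key]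
  rw [Polynomial.rootMultiplicity_mul (mul_ne_zero h1 (mul_ne_zero d2 d3)),
      Polynomial.rootMultiplicity_mul (mul_ne_zero d2 d3),
      Polynomial.rootMultiplicity_mul (mul_ne_zero (mul_ne_zero h2 h3) d1),
      Polynomial.rootMultiplicity_mul (mul_ne_zero h2 h3)] at hL
  simp only [rfval, hf, hg, hfg, if_false]
  rw [← WithTop.coe_add, WithTop.coe_inj]
  omega


lemma rfval_neg (f : RatFunc F) : rfval (-f) = rfval f := by
  by_cases hf : f = 0
  · simp [hf]
  · have hnf : -f ≠ 0 := neg_ne_zero.mpr hf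
    have key := RatFunc.num_denom_neg f
    have h1 : (-f).num ≠ 0 := RatFunc.num_ne_zero hnf
    have h2 : f.num ≠ 0 := RatFunc.num_ne_zero hf
    have hn2 : -f.num ≠ 0 := neg_ne_zero.mpr h2
    have d1 := RatFunc.denom_ne_zero (-f)
    have d2 := RatFunc.denom_ne_zero f
    have hL : ((-f).num * f.denom).rootMultiplicity 0
        = (-f.num * (-f).denom).rootMultiplicity 0 := by rw [key]
    rw [Polynomial.rootMultiplicity_mul (mul_ne_zero h1 d2),
        Polynomial.rootMultiplicity_mul (mul_ne_zero hn2 d1)] at hL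
    have hneg : (-f.num).rootMultiplicity 0 = f.num.rootMultiplicity 0 := by
      have : (-f.num) = Polynomial.C (-1 : F) * f.num := by ring_nf; simp [Algebra.smul_def]
      rw [this, Polynomial.rootMultiplicity_mul (mul_ne_zero (by simp) h2),
        Polynomial.rootMultiplicity_eq_zero (by simp [Polynomial.IsRoot])]
      omega
    rw [hneg] at hL
    simp only [rfval, hf, hnf, if_false]
    rw [WithTop.coe_inj]
    omega

lemma rfHasLim_iff {f : RatFunc F} : rfHasLim f ↔ f.denom.eval 0 ≠ 0 := by
  by_cases hf : f = 0
  · subst hf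
    simp [rfHasLim, rfval_zero, RatFunc.denom_zero]
  · constructor
    · intro h hden
      have hrd : 0 < f.denom.rootMultiplicity 0 :=
        (Polynomial.rootMultiplicity_pos (RatFunc.denom_ne_zero f)).mpr hden
      have hX : (Polynomial.X - Polynomial.C (0:F)) ∣ f.denom :=
        Polynomial.dvd_iff_isRoot.mpr hden
      have hrn : f.num.rootMultiplicity 0 = 0 := by
        by_contra hn
        have hpos : 0 < f.num.rootMultiplicity 0 := Nat.pos_of_ne_zero hn
        have hroot : f.num.IsRoot 0 :=
          (Polynomial.rootMultiplicity_pos (RatFunc.num_ne_zero hf)).mp hpos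
        have hXn : (Polynomial.X - Polynomial.C (0:F)) ∣ f.num :=
          Polynomial.dvd_iff_isRoot.mpr hroot
        have := (RatFunc.isCoprime_num_denom f).isUnit_of_dvd' hXn hX
        simp at this
        exact Polynomial.not_isUnit_X this
      simp only [rfHasLim, rfval, hf, if_false] at h
      have : (0:ℤ) ≤ (f.num.rootMultiplicity 0 : ℤ) - (f.denom.rootMultiplicity 0 : ℤ) := by
        exact_mod_cast h
      omega
    · intro hden
      have hrd : f.denom.rootMultiplicity 0 = 0 :=
        Polynomial.rootMultiplicity_eq_zero hden
      simp only [rfHasLim, rfval, hf, if_false]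
      have h0 : (0:ℤ) ≤ (f.num.rootMultiplicity 0 : ℤ) - (f.denom.rootMultiplicity 0 : ℤ) := by
        rw [hrd]; omega
      exact_mod_cast h0

lemma rfHasLim_div {f g : RatFunc F} (hg : g ≠ 0) (h : rfval g ≤ rfval f) :
    rfHasLim (g⁻¹ * f) := by
  by_cases hf : f = 0
  · simp [hf, rfHasLim, rfval_zero]
  · have hq : g⁻¹ * f ≠ 0 := mul_ne_zero (inv_ne_zero hg) hf
    have hfe : f = g * (g⁻¹ * f) := by field_simp
    rw [hfe, rfval_mul hg hq] at h
    simp only [rfHasLim, rfval, hg, hq, if_false] at h ⊢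
    rw [← WithTop.coe_add, WithTop.coe_le_coe] at h
    have h0 : (0:ℤ) ≤ ((g⁻¹*f).num.rootMultiplicity 0 : ℤ) - ((g⁻¹*f).denom.rootMultiplicity 0 : ℤ) := by omega
    exact_mod_cast h0


/-- The subring of rational functions regular at 0. -/
def OO (F : Type*) [Field F] : Subring (RatFunc F) where
  carrier := {f | f.denom.eval 0 ≠ 0}
  mul_mem' := by
    intro x y hx hy
    have hd : (x * y).denom ∣ x.denom * y.denom := RatFunc.denom_mul_dvd x y
    have : (x * y).denom.eval 0 ∣ (x.denom * y.denom).eval 0 := Polynomial.eval_dvd hd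
    rw [Polynomial.eval_mul] at this
    exact ne_zero_of_dvd_ne_zero (mul_ne_zero hx hy) this
  add_mem' := by
    intro x y hx hy
    have hd : (x + y).denom ∣ x.denom * y.denom := RatFunc.denom_add_dvd x y
    have : (x + y).denom.eval 0 ∣ (x.denom * y.denom).eval 0 := Polynomial.eval_dvd hd
    rw [Polynomial.eval_mul] at this
    exact ne_zero_of_dvd_ne_zero (mul_ne_zero hx hy) this
  one_mem' := by simp [Set.mem_setOf_eq, RatFunc.denom_one]
  zero_mem' := by simp [Set.mem_setOf_eq, RatFunc.denom_zero]
  neg_mem' := by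
    intro x hx
    have h1 : (-x) = (algebraMap (Polynomial F) (RatFunc F) (Polynomial.C (-1))) * x := by
      rw [show Polynomial.C (-1 : F) = -1 by simp, _root_.map_neg, _root_.map_one, neg_one_mul]
    have hd : (-x).denom ∣ (algebraMap (Polynomial F) (RatFunc F) (Polynomial.C (-1))).denom * x.denom := by
      rw [h1]; exact RatFunc.denom_mul_dvd _ x
    rw [RatFunc.denom_algebraMap, one_mul] at hd
    have : (-x).denom.eval 0 ∣ x.denom.eval 0 := Polynomial.eval_dvd hd
    exact ne_zero_of_dvd_ne_zero hx this

lemma mem_OO {f : RatFunc F} : f ∈ OO F ↔ f.denom.eval 0 ≠ 0 := Iff.rfl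

lemma mem_OO_iff {f : RatFunc F} : f ∈ OO F ↔ rfHasLim f := by
  rw [rfHasLim_iff]; rfl

lemma eval₂_denom_ne (f : RatFunc F) (hf : f ∈ OO F) :
    Polynomial.eval₂ (RingHom.id F) 0 f.denom ≠ 0 := by
  rw [Polynomial.eval₂_at_zero]
  simpa [Polynomial.coeff_zero_eq_eval_zero] using (mem_OO.mp hf)

/-- Evaluation at 0 as a ring hom on `OO F`. -/
noncomputable def limHom : OO F →+* F where
  toFun f := rfLim f.1
  map_one' := by simp [rfLim, RatFunc.eval_one]
  map_zero' := by simp [rfLim, RatFunc.eval_zero]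
  map_mul' := fun x y => by
    simpa [rfLim] using
      RatFunc.eval_mul (RingHom.id F) 0 (eval₂_denom_ne x.1 x.2) (eval₂_denom_ne y.1 y.2)
  map_add' := fun x y => by
    simpa [rfLim] using
      RatFunc.eval_add (RingHom.id F) 0 (eval₂_denom_ne x.1 x.2) (eval₂_denom_ne y.1 y.2)

lemma limHom_apply (f : OO F) : limHom f = rfLim f.1 := rfl

end MinorsAux


namespace MinorsAux
variable {F : Type*} [Field F]

lemma colSub_mul {α : Type*} [CommRing α] {r n : ℕ} (A : Matrix (Fin r) (Fin r) α)
    (U : Matrix (Fin r) (Fin n) α) (S : {S : Finset (Fin n) // S.card = r}) :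
    colSub (A * U) S = A * colSub U S := by
  ext i j
  simp [colSub, Matrix.mul_apply, Matrix.submatrix_apply]

lemma rfval_det_ge {r n : ℕ} (U : Matrix (Fin r) (Fin n) (RatFunc F))
    (S₀ : {S : Finset (Fin n) // S.card = r})
    (hmin : ∀ S, rfval (colSub U S₀).det ≤ rfval (colSub U S).det)
    (g : Fin r → Fin n) :
    rfval (colSub U S₀).det ≤ rfval (U.submatrix id g).det := by
  by_cases hg : Function.Injective g
  · set S : Finset (Fin n) := Finset.image g Finset.univ with hS
    have hc : S.card = r := by
      rw [hS, Finset.card_image_of_injective _ hg, Finset.card_univ, Fintype.card_fin]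
    have hmem : ∀ k, g k ∈ S := fun k => Finset.mem_image_of_mem g (Finset.mem_univ k)
    set σ : Fin r → Fin r := fun k => (S.orderIsoOfFin hc).symm ⟨g k, hmem k⟩ with hσ
    have hσinj : Function.Injective σ := by
      intro a b hab
      apply hg
      have := congrArg (fun x => ((S.orderIsoOfFin hc) x : Fin n)) hab
      simpa [hσ] using this
    have hbij := Finite.injective_iff_bijective.mp hσinj
    set e : Equiv.Perm (Fin r) := Equiv.ofBijective σ hbij with he
    have hsub : U.submatrix id g = (colSub U ⟨S, hc⟩).submatrix id e := by
      ext i k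
      simp only [Matrix.submatrix_apply, id_eq, colSub]
      have heq : e k = σ k := rfl
      rw [heq, hσ]
      simp
    rw [hsub, Matrix.det_permute' e]
    rcases Int.units_eq_one_or (Equiv.Perm.sign e) with h1 | h1 <;> rw [h1]
    · simpa using hmin ⟨S, hc⟩
    · rw [Units.val_neg, Units.val_one, Int.cast_neg, Int.cast_one, neg_one_mul, rfval_neg]
      exact hmin ⟨S, hc⟩
  · rw [Function.not_injective_iff] at hg
    obtain ⟨a, b, hab, hne⟩ := hg
    have hdet : (U.submatrix id g).det = 0 :=
      Matrix.det_zero_of_column_eq hne (fun k => by simp [Matrix.submatrix_apply, hab])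
    rw [hdet, rfval_zero]
    exact le_top

end MinorsAux


set_option synthInstance.maxHeartbeats 1000000
set_option maxHeartbeats 2000000
open MinorsAux

/-- If all r×r minors of U ∈ F(ε)^{r×n} have limits as ε → 0, then there is Û ∈ F^{r×n}
whose minors equal those limits. -/
theorem minors_limit_realizable {F : Type*} [Field F] {r n : ℕ}
    (U : Matrix (Fin r) (Fin n) (RatFunc F))
    (hU : ∀ S : {S : Finset (Fin n) // S.card = r}, rfHasLim (colSub U S).det) :
    ∃ Uhat : Matrix (Fin r) (Fin n) F,
      ∀ S : {S : Finset (Fin n) // S.card = r},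
        rfLim (colSub U S).det = (colSub Uhat S).det := by
  classical
  rcases isEmpty_or_nonempty {S : Finset (Fin n) // S.card = r} with h | h
  · exact ⟨0, fun S => (h.false S).elim⟩
  obtain ⟨S₀, -, hmin'⟩ := Finset.exists_min_image Finset.univ
    (fun S => rfval (colSub U S).det) Finset.univ_nonempty
  have hmin : ∀ S, rfval (colSub U S₀).det ≤ rfval (colSub U S).det :=
    fun S => hmin' S (Finset.mem_univ S)
  by_cases hb0 : (colSub U S₀).det = 0
  · -- all minors are zero
    have hall : ∀ S, (colSub U S).det = 0 := by
      intro S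
      apply eq_zero_of_rfval_eq_top
      have h1 := hmin S
      rw [hb0, rfval_zero] at h1
      exact top_le_iff.mp h1
    have hr : r ≠ 0 := by
      intro hr0
      subst hr0
      rw [Matrix.det_fin_zero] at hb0
      exact one_ne_zero hb0
    haveI : Nonempty (Fin r) := ⟨⟨0, Nat.pos_of_ne_zero hr⟩⟩
    refine ⟨0, fun S => ?_⟩
    have h0 : colSub (0 : Matrix (Fin r) (Fin n) F) S = 0 := rfl
    rw [hall S, h0, Matrix.det_zero]
    simp [rfLim, RatFunc.eval_zero]
  · -- main case
    set B := colSub U S₀ with hB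
    set b := B.det with hbdef
    have hBdet : IsUnit B.det := isUnit_iff_ne_zero.mpr hb0
    set V := B⁻¹ * U with hV
    have hBV : B * V = U := by
      rw [hV, ← Matrix.mul_assoc, Matrix.mul_nonsing_inv B hBdet, Matrix.one_mul]
    have hVmem : ∀ i j, V i j ∈ OO F := by
      intro i j
      have h3 : B *ᵥ (fun k => V k j) = (fun k => U k j) := by
        funext k
        have := congrFun (congrFun hBV k) j
        simpa [Matrix.mul_apply, Matrix.mulVec, dotProduct] using this
      have hcram : b * V i j = (B.updateCol i (fun k => U k j)).det := by
        have h2 : Matrix.cramer B (fun k => U k j) = b • (fun k => V k j) := by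
          rw [Matrix.cramer_eq_adjugate_mulVec, ← h3, Matrix.mulVec_mulVec,
            Matrix.adjugate_mul, Matrix.smul_mulVec, Matrix.one_mulVec]
        have := congrFun h2 i
        rw [Matrix.cramer_apply] at this
        simpa [Pi.smul_apply, smul_eq_mul, eq_comm] using this
      have hupd : B.updateCol i (fun k => U k j)
          = U.submatrix id (fun l => if l = i then j else (S₀.1.orderIsoOfFin S₀.2 l : Fin n)) := by
        ext k l
        rw [Matrix.updateCol_apply]
        by_cases hl : l = i <;> simp [hl, hB, colSub]
      have hVeq : V i j = b⁻¹ * (b * V i j) := by field_simp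
      rw [mem_OO_iff, hVeq]
      apply rfHasLim_div hb0
      rw [hcram, hupd]
      exact rfval_det_ge U S₀ hmin _
    set Vt : Matrix (Fin r) (Fin n) (OO F) := fun i j => ⟨V i j, hVmem i j⟩ with hVt
    set Vhat : Matrix (Fin r) (Fin n) F := fun i j => limHom (Vt i j) with hVhat
    have hbLim : rfHasLim b := hU S₀
    set c := rfLim b with hc
    refine ⟨fun i j => (if (i : ℕ) = 0 then c else 1) * Vhat i j, fun S => ?_⟩
    have hUS : colSub U S = B * colSub V S := by
      rw [hV, colSub_mul, ← Matrix.mul_assoc, Matrix.mul_nonsing_inv B hBdet, Matrix.one_mul]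
    have hval : ∀ T : {S : Finset (Fin n) // S.card = r},
        (colSub V T).det = ((OO F).subtype) ((colSub Vt T).det) := by
      intro T
      rw [RingHom.map_det]
      rfl
    have hdetV_mem : (colSub V S).det ∈ OO F := by
      rw [hval S]
      exact SetLike.coe_mem _
    have hlim_det : rfLim (colSub V S).det = (colSub Vhat S).det := by
      have h1 : rfLim (colSub V S).det = limHom ((colSub Vt S).det) := by
        rw [limHom_apply]
        congr 1
        rw [hval S]
        rfl
      rw [h1, RingHom.map_det]
      rfl
    have hmulLim : rfLim (b * (colSub V S).det) = c * rfLim (colSub V S).det := by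
      show RatFunc.eval (RingHom.id F) 0 _ = _
      rw [RatFunc.eval_mul (RingHom.id F) 0 (eval₂_denom_ne b (mem_OO_iff.mpr hbLim))
        (eval₂_denom_ne _ hdetV_mem)]
      rfl
    have hprod : (∏ i : Fin r, (if (i : ℕ) = 0 then c else 1)) = c := by
      rcases Nat.eq_zero_or_pos r with hr | hr
      · subst hr
        have hb1 : b = 1 := by rw [hbdef, Matrix.det_fin_zero]
        rw [hc, hb1]
        simp [rfLim, RatFunc.eval_one]
      · rw [Finset.prod_eq_single (⟨0, hr⟩ : Fin r)]
        · simp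
        · intro i _ hi
          rw [if_neg]
          intro h0
          exact hi (Fin.ext h0)
        · intro hmem
          exact absurd (Finset.mem_univ _) hmem
    have hscale : colSub (fun (i : Fin r) (j : Fin n) => (if (i : ℕ) = 0 then c else 1) * Vhat i j) S
        = Matrix.of (fun (i j : Fin r) => (if (i : ℕ) = 0 then c else 1) * (colSub Vhat S) i j) := rfl
    rw [hUS, Matrix.det_mul, hmulLim, hlim_det, hscale, Matrix.det_mul_column, hprod]
end

section
/- Non-closure of Hadamard products of a variety: Consider the affine cone C = {(x,y,z) ∈ ℂ^3 : xz + y^2 − x^2 = 0}. The point (0,1,0) is not a coordinatewise product of two points of C, but it is a limit (as ε → 0) of coordinatewise products of points of C; specifically, (ε, 1, ε − 1/ε) and (1, 1, 0) both lie on C for ε ≠ 0 and their coordinatewise product tends to (0, 1, 0). Hence the set {p ⊙ q : p, q ∈ C} (coordinatewise product) is not closed. -/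
/-- The affine cone {(x,y,z) ∈ ℂ³ : xz + y² − x² = 0}. -/
def coneXYZ : Set (ℂ × ℂ × ℂ) := {p | p.1 * p.2.2 + p.2.1 ^ 2 - p.1 ^ 2 = 0}

/-- The set of coordinatewise (Hadamard) products of pairs of points of the cone. -/
def hadamardProds : Set (ℂ × ℂ × ℂ) :=
  {p | ∃ a ∈ coneXYZ, ∃ b ∈ coneXYZ,
    p = (a.1 * b.1, a.2.1 * b.2.1, a.2.2 * b.2.2)}

/-! On the cone, `x = 0` forces `y² = 0`; so a product `a ⊙ b` with first coordinate `0` has a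
factor with `x = y = 0`, and its second coordinate vanishes. On the other hand
`(ε, 1, ε - 1/ε) ⊙ (1, 1, 0) = (ε, 1, 0)` tends to `(0, 1, 0)` as `ε → 0`. -/

open Topology

theorem mem_coneXYZ {p : ℂ × ℂ × ℂ} :
    p ∈ coneXYZ ↔ p.1 * p.2.2 + p.2.1 ^ 2 - p.1 ^ 2 = 0 :=
  Iff.rfl

theorem snd_fst_eq_zero_of_mem_coneXYZ {p : ℂ × ℂ × ℂ} (hp : p ∈ coneXYZ) (h : p.1 = 0) :
    p.2.1 = 0 := by
  rw [mem_coneXYZ, h] at hp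
  exact pow_eq_zero_iff two_ne_zero |>.mp (by simpa using hp)

theorem zero_one_zero_notMem_hadamardProds : ((0, 1, 0) : ℂ × ℂ × ℂ) ∉ hadamardProds := by
  rintro ⟨a, ha, b, hb, h⟩
  simp only [Prod.ext_iff] at h
  obtain ⟨hx, hy, -⟩ := h
  rcases mul_eq_zero.mp hx.symm with ha0 | hb0
  · simp [snd_fst_eq_zero_of_mem_coneXYZ ha ha0] at hy
  · simp [snd_fst_eq_zero_of_mem_coneXYZ hb hb0] at hy

theorem mk_one_zero_mem_hadamardProds {ε : ℂ} (hε : ε ≠ 0) :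
    ((ε, 1, 0) : ℂ × ℂ × ℂ) ∈ hadamardProds := by
  refine ⟨(ε, 1, ε - 1 / ε), ?_, (1, 1, 0), ?_, by simp⟩
  · rw [mem_coneXYZ]
    field_simp
    ring
  · simp [mem_coneXYZ]

theorem zero_one_zero_mem_closure_hadamardProds :
    ((0, 1, 0) : ℂ × ℂ × ℂ) ∈ closure hadamardProds := by
  have hlim : Filter.Tendsto (fun ε : ℂ => ((ε, 1, 0) : ℂ × ℂ × ℂ)) (𝓝[≠] 0) (𝓝 (0, 1, 0)) :=
    (Continuous.tendsto (by fun_prop) 0).mono_left nhdsWithin_le_nhds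
  exact mem_closure_of_tendsto hlim
    (eventually_mem_nhdsWithin.mono fun _ hε => mk_one_zero_mem_hadamardProds hε)

/-- (0,1,0) is not a coordinatewise product of two points of the cone, yet it is a limit of
such products; hence the set of coordinatewise products of pairs of points of the cone is not
closed (in the Euclidean topology on ℂ³). -/
theorem hadamard_products_not_closed :
    ((0, 1, 0) : ℂ × ℂ × ℂ) ∉ hadamardProds ∧
    ((0, 1, 0) : ℂ × ℂ × ℂ) ∈ closure hadamardProds ∧
    ¬ IsClosed hadamardProds :=
  ⟨zero_one_zero_notMem_hadamardProds, zero_one_zero_mem_closure_hadamardProds,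
    fun hc => zero_one_zero_notMem_hadamardProds
      (hc.closure_subset zero_one_zero_mem_closure_hadamardProds)⟩
end
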